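/- Let d ≥ 2 and 2 ≤ r ≤ d, and let ρ_r = (1/r) Σ_{l=1}^r E_{ll}. Then for any k ∈ {1,…,d} and any two distinct indices i ≠ j with 1 ≤ i, j ≤ r, the single-sample second moment of an off-diagonal entry of the A block of the covariant-measurement least squares estimator equals d(d+1)² · ∫_{U(d)} ⟨e_k, U*ρ_r U e_k⟩ · |U_{ik}|² |U_{jk}|² dU = ((r+2)/r) · ((d+1)/(d+2)). -/

import Mathlib

open MeasureTheory ProbabilityTheory Matrix
open scoped ComplexOrder

/-- The Borel (= product) σ-algebra on `d × d` complex matrices. -/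
noncomputable instance matrixMeasurableSpace (d : ℕ) : MeasurableSpace (Matrix (Fin d) (Fin d) ℂ) :=
  MeasurableSpace.pi

/-- A density matrix: positive semidefinite with trace one. -/
def IsDensityMatrix {d : ℕ} (ρ : Matrix (Fin d) (Fin d) ℂ) : Prop :=
  ρ.PosSemidef ∧ ρ.trace = 1

/-- The rank-one projection `U E_{jj} U*`. -/
noncomputable def covProj (d : ℕ) (j : Fin d) (U : Matrix.unitaryGroup (Fin d) ℂ) :
    Matrix (Fin d) (Fin d) ℂ :=
  (U : Matrix (Fin d) (Fin d) ℂ) * Matrix.single j j 1 *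
    star (U : Matrix (Fin d) (Fin d) ℂ)

/-- The outcome law `μ_ρ` of the covariant measurement on the state `ρ`, built from the Haar
probability measure `μ` on the unitary group: the distribution of `U E_{JJ} U*` where `U ~ μ`
and, conditionally on `U`, `J = j` has probability `⟨e_j, U* ρ U e_j⟩`. -/
noncomputable def covariantLaw (d : ℕ) (μ : Measure (Matrix.unitaryGroup (Fin d) ℂ))
    (ρ : Matrix (Fin d) (Fin d) ℂ) : Measure (Matrix (Fin d) (Fin d) ℂ) :=
  Measure.sum fun j : Fin d =>
    Measure.map (covProj d j)
      (μ.withDensity fun U =>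
        ENNReal.ofReal
          ((star (U : Matrix (Fin d) (Fin d) ℂ) * ρ * (U : Matrix (Fin d) (Fin d) ℂ)) j j).re)

/-- The least squares estimator `ρ̂_LS = (1/N) Σ_i ((d+1) P_i - I)`. -/
noncomputable def lsEst {Ω : Type*} (d N : ℕ) (P : Fin N → Ω → Matrix (Fin d) (Fin d) ℂ)
    (ω : Ω) : Matrix (Fin d) (Fin d) ℂ :=
  (N : ℂ)⁻¹ • ∑ i, ((d + 1 : ℂ) • P i ω - 1)

/-- Squared Frobenius norm `‖A‖₂² = Tr(A* A)`. -/
noncomputable def frobSq {d : ℕ} (A : Matrix (Fin d) (Fin d) ℂ) : ℝ :=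
  (Matrix.trace (Aᴴ * A)).re

/-- Frobenius norm `‖A‖₂ = (Tr(A* A))^{1/2}`. -/
noncomputable def frobNorm {d : ℕ} (A : Matrix (Fin d) (Fin d) ℂ) : ℝ :=
  Real.sqrt (Matrix.trace (Aᴴ * A)).re

/-- Operator norm (largest singular value) of a matrix, as the `ℓ² → ℓ²` operator norm. -/
noncomputable def opNorm {d : ℕ} (A : Matrix (Fin d) (Fin d) ℂ) : ℝ :=
  ‖LinearMap.toContinuousLinearMap (Matrix.toEuclideanLin A)‖

/-- Trace norm `‖A‖₁ = Tr|A|`: the sum of the singular values of `A`. -/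
noncomputable def traceNorm {d : ℕ} (A : Matrix (Fin d) (Fin d) ℂ) : ℝ :=
  ∑ i, Real.sqrt ((Matrix.posSemidef_conjTranspose_mul_self A).1.eigenvalues i)

/-- The rank-`r` density matrix `ρ_r = (1/r) Σ_{i=1}^r E_{ii}`. -/
noncomputable def rhoR (d r : ℕ) : Matrix (Fin d) (Fin d) ℂ :=
  (r : ℂ)⁻¹ • ∑ i : Fin d, if (i : ℕ) < r then Matrix.single i i 1 else 0

/-!
Write `X_l(U) = |U_{lk}|²` for the squared moduli of the `k`-th column of `U`; they sum to `1`.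
Left invariance of `μ` under permutation matrices makes every moment `E[∏ X_l]` invariant under
relabelling the indices. Left invariance under two unitaries mixing rows `a` and `b` with equal
weights gives the pointwise identity `X_a X_b ∘ V₁ + X_a X_b ∘ V₂ = (X_a² + X_b²) / 2`, which does
not touch the other `X_l`, hence `4 E[X_a X_b g] = E[X_a² g] + E[X_b² g]` whenever `g` involves
neither `a` nor `b`. Summing over `l` with `∑ X_l = 1` then forces `E[X_a X_b] = 1/(d(d+1))`,
`E[X_a² X_b] = 2/(d(d+1)(d+2))` and `E[X_l X_a X_b] = 1/(d(d+1)(d+2))` for distinct `l, a, b`.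
Finally `⟨e_k, U* ρ_r U e_k⟩ = (1/r) ∑_{l<r} X_l`.
-/

namespace Matrix

variable {n α : Type*} [Fintype n] [DecidableEq n] [CommRing α] [StarRing α]

theorem permMatrix_mem_unitaryGroup (σ : Equiv.Perm n) : σ.permMatrix α ∈ unitaryGroup n α := by
  rw [mem_unitaryGroup_iff', star_eq_conjTranspose, conjTranspose_permMatrix, ← permMatrix_mul,
    mul_inv_cancel, permMatrix_one]

theorem one_sub_smul_vecMulVec_mem_unitaryGroup (w : n → α) {c : α}
    (hc : c + star c = (star w ⬝ᵥ w) * (star c * c)) :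
    1 - c • vecMulVec w (star w) ∈ unitaryGroup n α := by
  have hsq : vecMulVec w (star w) * vecMulVec w (star w) =
      (star w ⬝ᵥ w) • vecMulVec w (star w) := by
    rw [vecMulVec_mul_vecMulVec, vecMulVec_smul]
  rw [mem_unitaryGroup_iff', star_eq_conjTranspose, conjTranspose_sub, conjTranspose_one,
    conjTranspose_smul, conjTranspose_vecMulVec, star_star, sub_mul, mul_sub, mul_sub, one_mul,
    mul_one, one_mul, smul_mul_smul_comm, hsq, smul_smul]
  linear_combination (norm := module) (-1 : α) • hc • vecMulVec w (star w)

def permUnitary (σ : Equiv.Perm n) : unitaryGroup n α :=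
  ⟨σ.permMatrix α, permMatrix_mem_unitaryGroup σ⟩

theorem permUnitary_mul_apply (σ : Equiv.Perm n) (U : unitaryGroup n α) (i j : n) :
    ((permUnitary σ * U : unitaryGroup n α) : Matrix n n α) i j = (U : Matrix n n α) (σ i) j := by
  simp [permUnitary, PEquiv.toMatrix_toPEquiv_mul]

theorem re_star_mul_diagonal_ofReal_mul_apply_self (U : Matrix n n ℂ) (w : n → ℝ) (k : n) :
    ((star U * diagonal (fun l => (w l : ℂ)) * U) k k).re = ∑ l, w l * ‖U l k‖ ^ 2 := by
  rw [mul_apply, Complex.re_sum]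
  refine Finset.sum_congr rfl fun l _ => ?_
  rw [mul_diagonal, star_apply, RCLike.star_def, mul_right_comm, Complex.conj_mul',
    ← Complex.ofReal_pow, ← Complex.ofReal_mul, Complex.ofReal_re, mul_comm]

noncomputable section PairMixing

variable {a b : n}

def pairVec (a b : n) (z : ℂ) : n → ℂ := Pi.single a 1 + Pi.single b z

theorem star_pairVec_dotProduct_self (hab : a ≠ b) (z : ℂ) :
    star (pairVec a b z) ⬝ᵥ pairVec a b z = 1 + star z * z := by
  simp [pairVec, dotProduct, Pi.single_apply, Finset.sum_add_distrib, add_mul, mul_add, hab,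
    hab.symm]

/-- Rows `a` and `b` of `pairMixing hab z hz * U` are `(1 + i)/2 • (u_a + i z̄ u_b)` and
`(1 + i)/2 • (u_b + i z u_a)`, where `u` is the corresponding column of `U`; the other rows are
those of `U`. -/
def pairMixing (hab : a ≠ b) (z : ℂ) (hz : star z * z = 1) : unitaryGroup n ℂ :=
  ⟨1 - ((1 - Complex.I) / 2) • vecMulVec (pairVec a b z) (star (pairVec a b z)),
    one_sub_smul_vecMulVec_mem_unitaryGroup _ <| by
      have hc : star ((1 - Complex.I) / 2) = (1 + Complex.I) / 2 := by simp
      rw [star_pairVec_dotProduct_self hab, hz, hc]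
      linear_combination (1 / 2 : ℂ) * Complex.I_sq⟩

theorem pairMixing_mul_apply (hab : a ≠ b) (z : ℂ) (hz : star z * z = 1) (U : unitaryGroup n ℂ)
    (i j : n) :
    ((pairMixing hab z hz * U : unitaryGroup n ℂ) : Matrix n n ℂ) i j =
      (U : Matrix n n ℂ) i j - (1 - Complex.I) / 2 * pairVec a b z i *
        ((U : Matrix n n ℂ) a j + star z * (U : Matrix n n ℂ) b j) := by
  have hvec : star (pairVec a b z) ᵥ* (U : Matrix n n ℂ) =
      fun j => (U : Matrix n n ℂ) a j + star z * (U : Matrix n n ℂ) b j := by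
    ext j
    simp only [pairVec, vecMul, dotProduct, Pi.star_apply, Pi.add_apply, star_add, add_mul,
      Finset.sum_add_distrib, Pi.single_apply, apply_ite star, star_one, star_zero, ite_mul,
      one_mul, zero_mul, Finset.sum_ite_eq', Finset.mem_univ, if_true]
  change ((1 - ((1 - Complex.I) / 2) • vecMulVec (pairVec a b z) (star (pairVec a b z))) *
    (U : Matrix n n ℂ)) i j = _
  rw [sub_mul, one_mul, smul_mul, vecMulVec_mul, hvec, sub_apply, smul_apply, vecMulVec_apply,
    smul_eq_mul, mul_assoc]

end PairMixing

end Matrix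

theorem measurable_unitaryGroup_entry {d : ℕ} (l m : Fin d) :
    Measurable fun U : unitaryGroup (Fin d) ℂ => (U : Matrix (Fin d) (Fin d) ℂ) l m :=
  (measurable_pi_apply m).comp ((measurable_pi_apply l).comp measurable_subtype_coe)

theorem measurable_unitaryGroup_of_entries {d : ℕ} {α : Type*} [MeasurableSpace α]
    {f : α → unitaryGroup (Fin d) ℂ}
    (hf : ∀ l m, Measurable fun x => (f x : Matrix (Fin d) (Fin d) ℂ) l m) : Measurable f :=
  (measurable_pi_lambda _ fun l => measurable_pi_lambda _ (hf l)).subtype_mk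

instance (d : ℕ) : MeasurableMul (unitaryGroup (Fin d) ℂ) where
  measurable_const_mul V := measurable_unitaryGroup_of_entries fun l m => by
    simp only [Submonoid.coe_mul, mul_apply]
    exact Finset.measurable_sum _ fun j _ => (measurable_unitaryGroup_entry j m).const_mul _
  measurable_mul_const V := measurable_unitaryGroup_of_entries fun l m => by
    simp only [Submonoid.coe_mul, mul_apply]
    exact Finset.measurable_sum _ fun j _ => (measurable_unitaryGroup_entry l j).mul_const _

noncomputable section

namespace HaarColumn

variable {d : ℕ}

def colWeight (k : Fin d) (U : unitaryGroup (Fin d) ℂ) (l : Fin d) : ℝ :=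
  ‖(U : Matrix (Fin d) (Fin d) ℂ) l k‖ ^ 2

theorem colWeight_nonneg (k : Fin d) (U : unitaryGroup (Fin d) ℂ) (l : Fin d) :
    0 ≤ colWeight k U l := by
  unfold colWeight; positivity

theorem sum_colWeight (k : Fin d) (U : unitaryGroup (Fin d) ℂ) : ∑ l, colWeight k U l = 1 := by
  have h := congrArg (fun M : Matrix (Fin d) (Fin d) ℂ => (M k k).re)
    (UnitaryGroup.star_mul_self U)
  simp only [mul_apply, star_apply, RCLike.star_def, ← Complex.normSq_eq_conj_mul_self,
    Complex.normSq_eq_norm_sq, one_apply_eq, Complex.one_re] at h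
  exact_mod_cast h

theorem colWeight_le_one (k : Fin d) (U : unitaryGroup (Fin d) ℂ) (l : Fin d) :
    colWeight k U l ≤ 1 :=
  (Finset.single_le_sum (fun m _ => colWeight_nonneg k U m) (Finset.mem_univ l)).trans
    (sum_colWeight k U).le

theorem measurable_colWeight (k l : Fin d) : Measurable fun U => colWeight k U l :=
  (measurable_unitaryGroup_entry l k).norm.pow_const 2

theorem colWeight_permUnitary_mul (k : Fin d) (σ : Equiv.Perm (Fin d))
    (U : unitaryGroup (Fin d) ℂ) :
    colWeight k (permUnitary σ * U) = colWeight k U ∘ σ :=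
  funext fun l => by simp [colWeight, permUnitary_mul_apply]

theorem colWeight_pairMixing_mul_of_ne (k : Fin d) {a b : Fin d} (hab : a ≠ b) {z : ℂ}
    (hz : star z * z = 1) (U : unitaryGroup (Fin d) ℂ) {l : Fin d} (hla : l ≠ a) (hlb : l ≠ b) :
    colWeight k (pairMixing hab z hz * U) l = colWeight k U l := by
  simp [colWeight, pairMixing_mul_apply, pairVec, hla, hlb]

theorem colWeight_mul_colWeight_pairMixing_sum (k : Fin d) {a b : Fin d} (hab : a ≠ b)
    (U : unitaryGroup (Fin d) ℂ) :
    colWeight k (pairMixing hab 1 (by simp) * U) a *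
        colWeight k (pairMixing hab 1 (by simp) * U) b +
      colWeight k (pairMixing hab Complex.I (by simp) * U) a *
        colWeight k (pairMixing hab Complex.I (by simp) * U) b =
      (colWeight k U a ^ 2 + colWeight k U b ^ 2) / 2 := by
  simp only [colWeight, pairMixing_mul_apply, pairVec, Pi.add_apply, Pi.single_apply, hab,
    hab.symm, if_true, if_false, add_zero, zero_add, Complex.sq_norm, Complex.normSq_apply]
  simp only [mul_one, star_one, one_mul, Complex.sub_re, Complex.mul_re, Complex.div_ofNat_re,
    Complex.one_re, Complex.I_re, sub_zero, one_div, Complex.add_re, Complex.div_ofNat_im,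
    Complex.sub_im, Complex.one_im, Complex.I_im, zero_sub, Complex.add_im, Complex.mul_im,
    RCLike.star_def, Complex.conj_I, neg_mul, Complex.neg_re, zero_mul, neg_neg, Complex.neg_im,
    zero_add, mul_zero, add_zero]
  ring

theorem measurable_prod_colWeight (k : Fin d) (s : Multiset (Fin d)) :
    Measurable fun U => (s.map (colWeight k U)).prod := by
  induction s using Multiset.induction_on with
  | empty => simp
  | cons l s ih =>
    simp only [Multiset.map_cons, Multiset.prod_cons]
    exact (measurable_colWeight k l).mul ih

variable (μ : Measure (unitaryGroup (Fin d) ℂ)) (k : Fin d)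

def colMoment (s : Multiset (Fin d)) : ℝ :=
  ∫ U, (s.map (colWeight k U)).prod ∂μ

theorem integrable_prod_colWeight [IsFiniteMeasure μ] (s : Multiset (Fin d)) :
    Integrable (fun U => (s.map (colWeight k U)).prod) μ := by
  refine Integrable.of_bound (C := 1) (measurable_prod_colWeight k s).aestronglyMeasurable
    (ae_of_all _ fun U => ?_)
  rw [Real.norm_of_nonneg (Multiset.prod_map_nonneg fun l _ => colWeight_nonneg k U l)]
  simpa using Multiset.prod_map_le_prod_map₀ _ (fun _ => (1 : ℝ))
    (fun l _ => colWeight_nonneg k U l) (fun l _ => colWeight_le_one k U l)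

theorem colMoment_zero [IsProbabilityMeasure μ] : colMoment μ k 0 = 1 := by
  simp [colMoment]

theorem sum_colMoment_cons [IsFiniteMeasure μ] (s : Multiset (Fin d)) :
    ∑ l, colMoment μ k (l ::ₘ s) = colMoment μ k s := by
  simp only [colMoment, Multiset.map_cons, Multiset.prod_cons]
  rw [← integral_finsetSum]
  · simp [← Finset.sum_mul, sum_colWeight]
  · exact fun l _ => by simpa using integrable_prod_colWeight μ k (l ::ₘ s)

theorem integral_sum_mul_colWeight_mul_prod [IsFiniteMeasure μ] (w : Fin d → ℝ)
    (s : Multiset (Fin d)) :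
    ∫ U, (∑ l, w l * colWeight k U l) * (s.map (colWeight k U)).prod ∂μ =
      ∑ l, w l * colMoment μ k (l ::ₘ s) := by
  simp only [Finset.sum_mul, colMoment, Multiset.map_cons, Multiset.prod_cons]
  rw [integral_finsetSum]
  · simp only [mul_assoc, integral_const_mul]
  · exact fun l _ => by
      simpa [mul_assoc] using (integrable_prod_colWeight μ k (l ::ₘ s)).const_mul (w l)

theorem colMoment_map_perm [μ.IsMulLeftInvariant] (σ : Equiv.Perm (Fin d))
    (s : Multiset (Fin d)) :
    colMoment μ k (s.map σ) = colMoment μ k s := by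
  unfold colMoment
  conv_rhs => rw [← integral_mul_left_eq_self _ (permUnitary σ)]
  simp only [Multiset.map_map, colWeight_permUnitary_mul]

theorem four_mul_colMoment_cons_cons [IsFiniteMeasure μ] [μ.IsMulLeftInvariant] {a b : Fin d}
    (hab : a ≠ b) {s : Multiset (Fin d)} (ha : a ∉ s) (hb : b ∉ s) :
    4 * colMoment μ k (a ::ₘ b ::ₘ s) =
      colMoment μ k (a ::ₘ a ::ₘ s) + colMoment μ k (b ::ₘ b ::ₘ s) := by
  set F : unitaryGroup (Fin d) ℂ → ℝ := fun U => ((a ::ₘ b ::ₘ s).map (colWeight k U)).prod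
  have hF : Integrable F μ := integrable_prod_colWeight μ k _
  have hfix : ∀ z (hz : star z * z = 1) U,
      (s.map (colWeight k (pairMixing hab z hz * U))).prod = (s.map (colWeight k U)).prod :=
    fun z hz U => congrArg Multiset.prod <| Multiset.map_congr rfl fun l hl =>
      colWeight_pairMixing_mul_of_ne k hab hz U (ne_of_mem_of_not_mem hl ha)
        (ne_of_mem_of_not_mem hl hb)
  have hmix : ∀ U, F (pairMixing hab 1 (by simp) * U) +
      F (pairMixing hab Complex.I (by simp) * U) =
      (((a ::ₘ a ::ₘ s).map (colWeight k U)).prod +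
        ((b ::ₘ b ::ₘ s).map (colWeight k U)).prod) / 2 := by
    intro U
    simp only [F, Multiset.map_cons, Multiset.prod_cons, hfix]
    linear_combination (s.map (colWeight k U)).prod * colWeight_mul_colWeight_pairMixing_sum k hab U
  calc 4 * colMoment μ k (a ::ₘ b ::ₘ s)
      = 2 * (∫ U, F (pairMixing hab 1 (by simp) * U) ∂μ +
          ∫ U, F (pairMixing hab Complex.I (by simp) * U) ∂μ) := by
        rw [integral_mul_left_eq_self, integral_mul_left_eq_self]
        unfold colMoment
        ring
    _ = 2 * ∫ U, (((a ::ₘ a ::ₘ s).map (colWeight k U)).prod +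
          ((b ::ₘ b ::ₘ s).map (colWeight k U)).prod) / 2 ∂μ := by
        rw [← integral_add (hF.comp_mul_left _) (hF.comp_mul_left _)]
        simp only [hmix]
    _ = colMoment μ k (a ::ₘ a ::ₘ s) + colMoment μ k (b ::ₘ b ::ₘ s) := by
        rw [integral_div, integral_add (integrable_prod_colWeight μ k _)
          (integrable_prod_colWeight μ k _)]
        unfold colMoment
        ring

theorem two_mul_colMoment_cons_pair [IsFiniteMeasure μ] [μ.IsMulLeftInvariant] {a b : Fin d}
    (hab : a ≠ b) (l : Fin d) :
    2 * colMoment μ k (l ::ₘ {a, b}) =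
      (1 + (if l = a then 1 else 0) + (if l = b then 1 else 0)) * colMoment μ k {a, a, b} := by
  have hsym := colMoment_map_perm μ k (Equiv.swap a b) {a, a, b}
  simp only [Multiset.insert_eq_cons, Multiset.map_cons, Multiset.map_singleton,
    Equiv.swap_apply_left, Equiv.swap_apply_right] at hsym ⊢
  by_cases hla : l = a
  · subst hla; rw [if_pos rfl, if_neg hab]; ring
  by_cases hlb : l = b
  · subst hlb
    simp only [hla, if_false, if_true]
    -- `cons_swap` is a permutation lemma, so `simp` sorts every cons-list into one fixed order.
    simp only [← Multiset.cons_zero, Multiset.cons_swap] at hsym ⊢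
    linarith
  have h4 := four_mul_colMoment_cons_cons μ k hab (s := {l}) (by simpa using Ne.symm hla)
    (by simpa using Ne.symm hlb)
  have h1 := colMoment_map_perm μ k (Equiv.swap l b) (a ::ₘ a ::ₘ {l})
  have h2 := colMoment_map_perm μ k (Equiv.swap l a) (b ::ₘ b ::ₘ {l})
  simp only [Multiset.map_cons, Multiset.map_singleton, Equiv.swap_apply_left,
    Equiv.swap_apply_of_ne_of_ne (Ne.symm hla) hab,
    Equiv.swap_apply_of_ne_of_ne (Ne.symm hlb) hab.symm] at h1 h2
  simp only [hla, hlb, if_false]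
  simp only [← Multiset.cons_zero, Multiset.cons_swap] at hsym h1 h2 h4 ⊢
  linarith

variable [IsProbabilityMeasure μ] [μ.IsMulLeftInvariant]

theorem colMoment_singleton (a : Fin d) : colMoment μ k {a} = (d : ℝ)⁻¹ := by
  have hsym : ∀ l, colMoment μ k {l} = colMoment μ k {a} := fun l => by
    simpa using colMoment_map_perm μ k (Equiv.swap a l) {a}
  have hsum := sum_colMoment_cons μ k 0
  simp only [Multiset.cons_zero, hsym, Finset.sum_const, Finset.card_univ, Fintype.card_fin,
    nsmul_eq_mul, colMoment_zero] at hsum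
  exact eq_inv_of_mul_eq_one_right hsum

theorem colMoment_pair {a b : Fin d} (hab : a ≠ b) :
    colMoment μ k {a, b} = ((d : ℝ) * (d + 1))⁻¹ := by
  simp only [Multiset.insert_eq_cons]
  have hdiag : colMoment μ k (b ::ₘ {b}) = 2 * colMoment μ k (a ::ₘ {b}) := by
    have h4 := four_mul_colMoment_cons_cons μ k hab (s := 0) (by simp) (by simp)
    have hswap := colMoment_map_perm μ k (Equiv.swap a b) {a, a}
    simp only [Multiset.cons_zero] at h4
    simp only [Multiset.insert_eq_cons, Multiset.map_cons, Multiset.map_singleton,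
      Equiv.swap_apply_left] at hswap
    linarith
  have hterm : ∀ l, colMoment μ k (l ::ₘ {b}) =
      (1 + if l = b then 1 else 0) * colMoment μ k (a ::ₘ {b}) := by
    intro l
    by_cases hlb : l = b
    · subst hlb; rw [hdiag]; norm_num
    · simpa [hlb, Equiv.swap_apply_of_ne_of_ne (Ne.symm hlb) hab.symm] using
        (colMoment_map_perm μ k (Equiv.swap l a) {l, b}).symm
  have hsum := sum_colMoment_cons μ k {b}
  rw [Finset.sum_congr rfl fun l _ => hterm l, ← Finset.sum_mul, colMoment_singleton] at hsum
  simp only [Finset.sum_add_distrib, Finset.sum_const, Finset.card_univ, Fintype.card_fin,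
    nsmul_eq_mul, mul_one, Finset.sum_ite_eq', Finset.mem_univ, if_true] at hsum
  rw [mul_inv, ← hsum]
  field_simp

theorem colMoment_triple {a b : Fin d} (hab : a ≠ b) :
    colMoment μ k {a, a, b} = 2 * ((d : ℝ) * (d + 1) * (d + 2))⁻¹ := by
  have hsum := congrArg (2 * ·) (sum_colMoment_cons μ k {a, b})
  simp only [Finset.mul_sum, two_mul_colMoment_cons_pair μ k hab, colMoment_pair μ k hab,
    ← Finset.sum_mul] at hsum
  simp only [Finset.sum_add_distrib, Finset.sum_const, Finset.card_univ, Fintype.card_fin,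
    nsmul_eq_mul, mul_one, Finset.sum_ite_eq', Finset.mem_univ, if_true,
    Multiset.insert_eq_cons] at hsum
  have hd : (d : ℝ) ≠ 0 := Nat.cast_ne_zero.2 (Fin.pos a).ne'
  simp only [Multiset.insert_eq_cons]
  field_simp at hsum ⊢
  linarith

theorem sum_mul_colMoment_cons_pair {a b : Fin d} (hab : a ≠ b) (w : Fin d → ℝ) :
    ∑ l, w l * colMoment μ k (l ::ₘ {a, b}) =
      (∑ l, w l + w a + w b) * ((d : ℝ) * (d + 1) * (d + 2))⁻¹ := by
  have hterm : ∀ l, w l * colMoment μ k (l ::ₘ {a, b}) =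
      (w l + (if l = a then w l else 0) + (if l = b then w l else 0)) *
        ((d : ℝ) * (d + 1) * (d + 2))⁻¹ := fun l => by
    have h2 := two_mul_colMoment_cons_pair μ k hab l
    rw [colMoment_triple μ k hab] at h2
    have hM : colMoment μ k (l ::ₘ {a, b}) = (1 + (if l = a then 1 else 0) +
        (if l = b then 1 else 0)) * ((d : ℝ) * (d + 1) * (d + 2))⁻¹ := by linarith
    rw [hM]
    split_ifs <;> ring
  simp only [hterm, ← Finset.sum_mul, Finset.sum_add_distrib, Finset.sum_ite_eq',
    Finset.mem_univ, if_true]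

end HaarColumn

end

theorem rhoR_eq_diagonal (d r : ℕ) :
    rhoR d r = diagonal fun l : Fin d => ((if (l : ℕ) < r then (r : ℝ)⁻¹ else 0 : ℝ) : ℂ) := by
  have hsingle : ∀ c : Fin d, (if (c : ℕ) < r then single c c (1 : ℂ) else 0) =
      single c c (if (c : ℕ) < r then 1 else 0) := fun c => by split_ifs <;> simp
  rw [rhoR, Finset.sum_congr rfl fun c _ => hsingle c, sum_single_eq_diagonal, ← diagonal_smul]
  congr 1
  ext l
  split_ifs with h <;> simp [h]

theorem sum_ite_val_lt_inv_eq_one {d r : ℕ} (hr : 0 < r) (hrd : r ≤ d) :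
    ∑ l : Fin d, (if (l : ℕ) < r then (r : ℝ)⁻¹ else 0) = 1 := by
  rw [Finset.sum_ite, Finset.sum_const_zero, add_zero, Finset.sum_const, nsmul_eq_mul,
    Fin.card_filter_val_lt, min_eq_right hrd]
  field_simp

open HaarColumn in
theorem covariant_ls_A_offdiagonal_moment_general
    (d r : ℕ) (hrd : r ≤ d)
    (μ : Measure (Matrix.unitaryGroup (Fin d) ℂ)) [IsProbabilityMeasure μ]
    (hμ : ∀ V : Matrix.unitaryGroup (Fin d) ℂ, μ.map (fun U => V * U) = μ)
    (k i j : Fin d) (hij : i ≠ j) (hi : (i : ℕ) < r) (hj : (j : ℕ) < r) :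
    (d : ℝ) * ((d : ℝ) + 1) ^ 2 *
      ∫ U, ((star (U : Matrix (Fin d) (Fin d) ℂ) * rhoR d r * (U : Matrix (Fin d) (Fin d) ℂ)) k k).re *
        (‖(U : Matrix (Fin d) (Fin d) ℂ) i k‖ ^ 2 * ‖(U : Matrix (Fin d) (Fin d) ℂ) j k‖ ^ 2) ∂μ
      = (((r : ℝ) + 2) / (r : ℝ)) * (((d : ℝ) + 1) / ((d : ℝ) + 2)) := by
  have : μ.IsMulLeftInvariant := ⟨hμ⟩
  have hr : 0 < r := (Nat.zero_le _).trans_lt hi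
  set w : Fin d → ℝ := fun l => if (l : ℕ) < r then (r : ℝ)⁻¹ else 0
  have hint := integral_sum_mul_colWeight_mul_prod μ k w {i, j}
  have hsum := sum_mul_colMoment_cons_pair μ k hij w
  simp only [Multiset.insert_eq_cons, Multiset.map_cons, Multiset.map_singleton,
    Multiset.prod_cons, Multiset.prod_singleton, colWeight] at hint hsum
  rw [rhoR_eq_diagonal]
  simp only [re_star_mul_diagonal_ofReal_mul_apply_self]
  rw [hint, hsum, sum_ite_val_lt_inv_eq_one hr hrd]
  simp only [w, hi, hj, if_true]
  have hd : (d : ℝ) ≠ 0 := Nat.cast_ne_zero.2 (Fin.pos i).ne'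
  have hr' : (r : ℝ) ≠ 0 := Nat.cast_ne_zero.2 hr.ne'
  field_simp
  ring

/-- Second moment of an off-diagonal entry of the `A` block of the
covariant-measurement LS estimator for `ρ_r`:
`d(d+1)²·∫ ⟨e_k, U*ρ_r U e_k⟩·|U_{ik}|²|U_{jk}|² dU = ((r+2)/r)·((d+1)/(d+2))`
for `1 ≤ i, j ≤ r`, `i ≠ j`. -/
theorem covariant_ls_A_offdiagonal_moment
    (d r : ℕ) (hd : 2 ≤ d) (hr : 2 ≤ r) (hrd : r ≤ d)
    (μ : Measure (Matrix.unitaryGroup (Fin d) ℂ)) [IsProbabilityMeasure μ]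
    (hμ : ∀ V : Matrix.unitaryGroup (Fin d) ℂ, μ.map (fun U => V * U) = μ)
    (k i j : Fin d) (hij : i ≠ j) (hi : (i : ℕ) < r) (hj : (j : ℕ) < r) :
    (d : ℝ) * ((d : ℝ) + 1) ^ 2 *
      ∫ U, ((star (U : Matrix (Fin d) (Fin d) ℂ) * rhoR d r * (U : Matrix (Fin d) (Fin d) ℂ)) k k).re *
        (‖(U : Matrix (Fin d) (Fin d) ℂ) i k‖ ^ 2 * ‖(U : Matrix (Fin d) (Fin d) ℂ) j k‖ ^ 2) ∂μ
      = (((r : ℝ) + 2) / (r : ℝ)) * (((d : ℝ) + 1) / ((d : ℝ) + 2)) :=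
  covariant_ls_A_offdiagonal_moment_general d r hrd μ hμ k i j hij hi hj
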